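/- arXiv:1110.6328 — 2 statements merged into one kernel-verified Lean document; each statement's English description precedes it below -/
import Mathlib

section
/- Let N ≥ 3 be an integer, t a real number, g ≥ 0, and V : {1,…,N} → ℝ. Let E_1 ≤ … ≤ E_N be the eigenvalues, in nondecreasing order, of the linear Hamiltonian H_0^P with periodic boundary conditions. Suppose ψ ∈ ℂ^N with ∑_{i=1}^N |ψ_i|² = 1 satisfies t(ψ_{i+1} + ψ_{i−1}) + V_i ψ_i + g|ψ_i|²ψ_i = Eψ_i for all i = 1,…,N with the Dirichlet convention ψ_0 = ψ_{N+1} = 0, for some real E. Then dist(E, ⋃_{n=1}^N [E_n, E_n + g]) ≤ |t|·√(|ψ_1|² + |ψ_N|²). In other words, the eigenenergy of a Dirichlet solution can lie in the forbidden region only within distance |t|·√(|ψ_1|² + |ψ_N|²) of its complement. -/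
open Matrix Filter

noncomputable section

/-- Successor site with periodic boundary conditions (index mod `N`). -/
def pSucc {N : ℕ} (i : Fin N) : Fin N :=
  ⟨(i.1 + 1) % N, Nat.mod_lt _ (Nat.lt_of_le_of_lt (Nat.zero_le _) i.isLt)⟩

/-- Predecessor site with periodic boundary conditions (index mod `N`). -/
def pPred {N : ℕ} (i : Fin N) : Fin N :=
  ⟨(i.1 + (N - 1)) % N, Nat.mod_lt _ (Nat.lt_of_le_of_lt (Nat.zero_le _) i.isLt)⟩

/-- The linear Hamiltonian `H_0^P` with periodic boundary conditions:
`(H ψ)_i = t (ψ_{i+1} + ψ_{i-1}) + V_i ψ_i`, indices mod `N`. -/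
def periodicH (N : ℕ) (t : ℝ) (V : Fin N → ℝ) : Matrix (Fin N) (Fin N) ℂ :=
  Matrix.of fun i j =>
    (if j = pSucc i then (t : ℂ) else 0) + (if j = pPred i then (t : ℂ) else 0) +
      (if j = i then (V i : ℂ) else 0)

/-- The linear Hamiltonian `H_0^D` with Dirichlet boundary conditions
(convention `ψ_0 = ψ_{N+1} = 0`). -/
def dirichletH (N : ℕ) (t : ℝ) (V : Fin N → ℝ) : Matrix (Fin N) (Fin N) ℂ :=
  Matrix.of fun i j =>
    (if i.1 + 1 = j.1 then (t : ℂ) else 0) + (if j.1 + 1 = i.1 then (t : ℂ) else 0) +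
      (if j = i then (V i : ℂ) else 0)

/-- Sum of the neighboring values `ψ_{i+1} + ψ_{i-1}` with the Dirichlet
convention `ψ_0 = ψ_{N+1} = 0`. -/
def dNbr {N : ℕ} (ψ : Fin N → ℂ) (i : Fin N) : ℂ :=
  (if h : i.1 + 1 < N then ψ ⟨i.1 + 1, h⟩ else 0) +
    (if 0 < i.1 then ψ ⟨i.1 - 1, Nat.lt_of_le_of_lt (Nat.sub_le _ _) i.isLt⟩ else 0)

/-- The stationary nonlinear Schrödinger equation with periodic boundary conditions:
`t (ψ_{i+1} + ψ_{i-1}) + V_i ψ_i + g |ψ_i|² ψ_i = E ψ_i`, indices mod `N`. -/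
def PeriodicNLS (N : ℕ) (t g : ℝ) (V : Fin N → ℝ) (ψ : Fin N → ℂ) (E : ℝ) : Prop :=
  ∀ i : Fin N,
    (t : ℂ) * (ψ (pSucc i) + ψ (pPred i)) + (V i : ℂ) * ψ i +
        (g : ℂ) * ((‖ψ i‖ : ℂ)) ^ 2 * ψ i = (E : ℂ) * ψ i

/-- The stationary nonlinear Schrödinger equation with Dirichlet boundary conditions:
`t (ψ_{i+1} + ψ_{i-1}) + V_i ψ_i + g |ψ_i|² ψ_i = E ψ_i`, with `ψ_0 = ψ_{N+1} = 0`. -/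
def DirichletNLS (N : ℕ) (t g : ℝ) (V : Fin N → ℝ) (ψ : Fin N → ℂ) (E : ℝ) : Prop :=
  ∀ i : Fin N,
    (t : ℂ) * dNbr ψ i + (V i : ℂ) * ψ i +
        (g : ℂ) * ((‖ψ i‖ : ℂ)) ^ 2 * ψ i = (E : ℂ) * ψ i

/-- Normalization `∑ i |ψ_i|² = 1`. -/
def Normalized {N : ℕ} (ψ : Fin N → ℂ) : Prop :=
  ∑ i, ‖ψ i‖ ^ 2 = 1

/-- `e` lists the eigenvalues of the Hermitian matrix `A` in nondecreasing order,
counted with multiplicity. -/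
def IsSortedEigenvalues {N : ℕ} {A : Matrix (Fin N) (Fin N) ℂ} (hA : A.IsHermitian)
    (e : Fin N → ℝ) : Prop :=
  Monotone e ∧ ∃ σ : Equiv.Perm (Fin N), ∀ i, e i = hA.eigenvalues (σ i)

/-! Put `B = H_0^P + g · diag |ψ|²`. The Dirichlet equation says `B ψ = E ψ` up to the two
hopping terms across the boundary, so `‖(B - E) ψ‖ = |t| √(|ψ_1|² + |ψ_N|²)` and `B` has an
eigenvalue `μ` that close to `E`. That `μ` lies in some `[E_n, E_n + g]`: for an eigenvector `φ`
of `B`, `⟪(H_0^P - μ + g) φ, (H_0^P - μ) φ⟫ = -∑ d_i (g - d_i) |φ_i|² ≤ 0` with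
`d_i = g |ψ_i|² ∈ [0, g]`, whereas in an eigenbasis of `H_0^P` this form is
`∑ (E_n - μ + g) (E_n - μ) |c_n|²`, positive unless some `E_n ∈ [μ - g, μ]`. -/

open Set

namespace OrthonormalBasis

variable {𝕜 E ι : Type*} [RCLike 𝕜] [NormedAddCommGroup E] [InnerProductSpace 𝕜 E] [Fintype ι]
  {T : E →ₗ[𝕜] E} {b : OrthonormalBasis ι 𝕜 E} {μ : ι → ℝ}

theorem repr_apply_of_eigen (hb : ∀ i, T (b i) = (μ i : 𝕜) • b i) (v : E) (i : ι) :
    b.repr (T v) i = μ i * b.repr v i := by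
  classical
  conv_lhs => rw [← b.sum_repr v]
  simp [hb, Pi.single_apply, RCLike.real_smul_eq_coe_mul, mul_comm]

theorem re_inner_sub_smul_sub_smul_of_eigen (hb : ∀ i, T (b i) = (μ i : 𝕜) • b i)
    (v : E) (a c : ℝ) :
    RCLike.re (inner 𝕜 (T v - (a : 𝕜) • v) (T v - (c : 𝕜) • v)) =
      ∑ i, (μ i - a) * (μ i - c) * ‖b.repr v i‖ ^ 2 := by
  rw [← b.repr.inner_map_map, PiLp.inner_apply, map_sum]
  refine Finset.sum_congr rfl fun i _ => ?_
  have hterm : inner 𝕜 (b.repr (T v - (a : 𝕜) • v) i) (b.repr (T v - (c : 𝕜) • v) i) =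
      (((μ i - a) * (μ i - c) * ‖b.repr v i‖ ^ 2 : ℝ) : 𝕜) := by
    simp only [map_sub, map_smul, PiLp.sub_apply, PiLp.smul_apply, smul_eq_mul,
      b.repr_apply_of_eigen hb, RCLike.inner_apply, ← sub_mul, map_mul, map_sub,
      RCLike.conj_ofReal]
    push_cast
    rw [← RCLike.conj_mul]
    ring
  rw [hterm, RCLike.ofReal_re]

theorem exists_mem_Icc_of_re_inner_sub_smul_nonpos (hb : ∀ i, T (b i) = (μ i : 𝕜) • b i)
    {v : E} (hv : v ≠ 0) {a c : ℝ} (hac : a ≤ c)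
    (h : RCLike.re (inner 𝕜 (T v - (a : 𝕜) • v) (T v - (c : 𝕜) • v)) ≤ 0) :
    ∃ i, μ i ∈ Icc a c := by
  by_contra! hout
  have hpos : ∀ i, 0 < (μ i - a) * (μ i - c) := fun i => by
    rcases not_and_or.1 (hout i) with hi | hi <;> push Not at hi <;> nlinarith
  obtain ⟨i, hi⟩ : ∃ i, b.repr v i ≠ 0 := by
    by_contra! h0
    exact hv (b.repr.map_eq_zero_iff.1 (by ext i; simp [h0]))
  rw [b.re_inner_sub_smul_sub_smul_of_eigen hb] at h
  refine h.not_gt (Finset.sum_pos' (fun i _ => by have := hpos i; positivity)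
    ⟨i, Finset.mem_univ i, by have := hpos i; positivity⟩)

theorem exists_abs_sub_le_norm_sub_smul_of_eigen (hb : ∀ i, T (b i) = (μ i : 𝕜) • b i)
    {v : E} (hv : ‖v‖ = 1) (e : ℝ) :
    ∃ i, |μ i - e| ≤ ‖T v - (e : 𝕜) • v‖ := by
  set r := ‖T v - (e : 𝕜) • v‖
  have hr : r ^ 2 = ∑ i, (μ i - e) * (μ i - e) * ‖b.repr v i‖ ^ 2 := by
    rw [← b.re_inner_sub_smul_sub_smul_of_eigen hb, inner_self_eq_norm_sq]
  have hv' : ∑ i, ‖b.repr v i‖ ^ 2 = 1 := by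
    rw [← EuclideanSpace.norm_sq_eq, b.repr.norm_map, hv, one_pow]
  -- the form of the interval `[e - r, e + r]` is `‖T v - e • v‖² - r² ‖v‖² = 0`
  have hquad : RCLike.re (inner 𝕜 (T v - ((e - r : ℝ) : 𝕜) • v) (T v - ((e + r : ℝ) : 𝕜) • v))
      = ∑ i, (μ i - e) * (μ i - e) * ‖b.repr v i‖ ^ 2 - r ^ 2 * ∑ i, ‖b.repr v i‖ ^ 2 := by
    rw [b.re_inner_sub_smul_sub_smul_of_eigen hb, Finset.mul_sum, ← Finset.sum_sub_distrib]
    exact Finset.sum_congr rfl fun i _ => by ring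
  obtain ⟨i, hi⟩ := b.exists_mem_Icc_of_re_inner_sub_smul_nonpos hb (a := e - r) (c := e + r)
    (norm_ne_zero_iff.1 (hv ▸ one_ne_zero)) (by linarith [norm_nonneg (T v - (e : 𝕜) • v)])
    (by rw [hquad, ← hr, hv', mul_one, sub_self])
  exact ⟨i, abs_sub_le_iff.2 ⟨by linarith [hi.2], by linarith [hi.1]⟩⟩

end OrthonormalBasis

namespace Matrix.IsHermitian

variable {𝕜 n : Type*} [RCLike 𝕜] [Fintype n] [DecidableEq n] {A : Matrix n n 𝕜}

theorem toEuclideanLin_eigenvectorBasis (hA : A.IsHermitian) (i : n) :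
    toEuclideanLin A (hA.eigenvectorBasis i) = (hA.eigenvalues i : 𝕜) • hA.eigenvectorBasis i := by
  ext j
  have := congrFun (hA.mulVec_eigenvectorBasis i) j
  rw [Pi.smul_apply, RCLike.real_smul_eq_coe_smul (K := 𝕜)] at this
  exact this

theorem exists_eigenvalues_add_diagonal_mem_Icc (hA : A.IsHermitian) {d : n → ℝ} {g : ℝ}
    (hd : ∀ i, d i ∈ Icc 0 g) (hB : (A + diagonal fun i => (d i : 𝕜)).IsHermitian) (k : n) :
    ∃ j, hB.eigenvalues k ∈ Icc (hA.eigenvalues j) (hA.eigenvalues j + g) := by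
  set φ := hB.eigenvectorBasis k
  set μ := hB.eigenvalues k
  have hAφ : ∀ i, (A *ᵥ φ) i = (μ - d i) * φ i := fun i => by
    have := congrFun (hB.mulVec_eigenvectorBasis k) i
    rw [add_mulVec, Pi.add_apply, mulVec_diagonal, Pi.smul_apply,
      RCLike.real_smul_eq_coe_mul] at this
    linear_combination this
  have hform : RCLike.re (inner 𝕜 (toEuclideanLin A φ - ((μ - g : ℝ) : 𝕜) • φ)
      (toEuclideanLin A φ - (μ : 𝕜) • φ)) ≤ 0 := by
    rw [PiLp.inner_apply, map_sum]
    refine Finset.sum_nonpos fun i _ => ?_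
    have hterm : inner 𝕜 ((toEuclideanLin A φ - ((μ - g : ℝ) : 𝕜) • φ) i)
        ((toEuclideanLin A φ - (μ : 𝕜) • φ) i) = ((-(d i * (g - d i)) * ‖φ i‖ ^ 2 : ℝ) : 𝕜) := by
      simp only [PiLp.sub_apply, PiLp.smul_apply, ofLp_toLpLin, toLin'_apply, hAφ, smul_eq_mul,
        RCLike.inner_apply, map_sub, map_mul, RCLike.conj_ofReal]
      push_cast
      rw [← RCLike.conj_mul]
      ring
    rw [hterm, RCLike.ofReal_re]
    have := hd i
    have : 0 ≤ d i * (g - d i) := mul_nonneg this.1 (sub_nonneg.2 this.2)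
    nlinarith [norm_nonneg (φ i)]
  obtain ⟨j, hj⟩ := hA.eigenvectorBasis.exists_mem_Icc_of_re_inner_sub_smul_nonpos
    hA.toEuclideanLin_eigenvectorBasis (hB.eigenvectorBasis.orthonormal.ne_zero k)
    (sub_le_self μ ((hd k).1.trans (hd k).2)) hform
  exact ⟨j, hj.2, by linarith [hj.1]⟩

end Matrix.IsHermitian

theorem periodicH_mulVec {N : ℕ} (t : ℝ) (V : Fin N → ℝ) (ψ : Fin N → ℂ) (i : Fin N) :
    (periodicH N t V *ᵥ ψ) i = t * (ψ (pSucc i) + ψ (pPred i)) + V i * ψ i := by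
  simp only [mulVec, dotProduct, periodicH, of_apply, add_mul, ite_mul, zero_mul,
    Finset.sum_add_distrib, Finset.sum_ite_eq', Finset.mem_univ, if_true]
  ring

theorem pSucc_add_pPred_sub_dNbr {N : ℕ} (hN : 2 ≤ N) (ψ : Fin N → ℂ) (i : Fin N) :
    ψ (pSucc i) + ψ (pPred i) - dNbr ψ i =
      (Pi.single (⟨N - 1, by omega⟩ : Fin N) (ψ ⟨0, by omega⟩) : Fin N → ℂ) i +
        (Pi.single (⟨0, by omega⟩ : Fin N) (ψ ⟨N - 1, by omega⟩) : Fin N → ℂ) i := by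
  obtain ⟨i, hi⟩ := i
  rcases (show i = 0 ∨ i = N - 1 ∨ (0 < i ∧ i + 1 < N) by omega) with rfl | rfl | ⟨h0, h1⟩
  · have hs : (0 + 1) % N = 1 := Nat.mod_eq_of_lt (by omega)
    simp [pSucc, pPred, dNbr, hs, show N - 1 ≠ 0 by omega, show 1 < N by omega]
  · have hs : (N - 1 + 1) % N = 0 := by rw [Nat.sub_add_cancel (by omega), Nat.mod_self]
    have hp : (N - 1 + (N - 1)) % N = N - 1 - 1 := by
      rw [show N - 1 + (N - 1) = N - 1 - 1 + N by omega, Nat.add_mod_right]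
      exact Nat.mod_eq_of_lt (by omega)
    simp [pSucc, pPred, dNbr, hs, hp, show N - 1 ≠ 0 by omega, show 1 < N by omega,
      show ¬N - 1 + 1 < N by omega]
  · have hs : (i + 1) % N = i + 1 := Nat.mod_eq_of_lt h1
    have hp : (i + (N - 1)) % N = i - 1 := by
      rw [show i + (N - 1) = i - 1 + N by omega, Nat.add_mod_right]
      exact Nat.mod_eq_of_lt (by omega)
    simp [pSucc, pPred, dNbr, hs, hp, h0, h1, h0.ne', show i ≠ N - 1 by omega]

theorem DirichletNLS.toEuclideanLin_periodicH_sub_smul {N : ℕ} (hN : 2 ≤ N) {t g : ℝ}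
    {V : Fin N → ℝ} {ψ : Fin N → ℂ} {E : ℝ} (hsol : DirichletNLS N t g V ψ E) :
    toEuclideanLin (periodicH N t V + diagonal fun i => ((g * ‖ψ i‖ ^ 2 : ℝ) : ℂ))
        (WithLp.toLp 2 ψ) - (E : ℂ) • WithLp.toLp 2 ψ =
      (t : ℂ) • (EuclideanSpace.single (⟨N - 1, by omega⟩ : Fin N) (ψ ⟨0, by omega⟩) +
        EuclideanSpace.single ⟨0, by omega⟩ (ψ ⟨N - 1, by omega⟩)) := by
  ext i
  simp only [PiLp.sub_apply, PiLp.smul_apply, PiLp.add_apply, ofLp_toLpLin, toLin'_apply,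
    add_mulVec, Pi.add_apply, periodicH_mulVec, mulVec_diagonal, PiLp.ofLp_single, smul_eq_mul]
  push_cast
  linear_combination hsol i + (t : ℂ) * pSucc_add_pPred_sub_dNbr hN ψ i

theorem EuclideanSpace.norm_single_add_single {𝕜 ι : Type*} [RCLike 𝕜] [Fintype ι]
    [DecidableEq ι] {i j : ι} (hij : i ≠ j) (a b : 𝕜) :
    ‖EuclideanSpace.single i a + EuclideanSpace.single j b‖ = √(‖a‖ ^ 2 + ‖b‖ ^ 2) := by
  rw [← Real.sqrt_sq (norm_nonneg _), sq,
    norm_add_sq_eq_norm_sq_add_norm_sq_of_inner_eq_zero (𝕜 := 𝕜)]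
  · simp [sq]
  · simp [EuclideanSpace.inner_single_left, hij.symm]

theorem Normalized.norm_sq_le_one {N : ℕ} {ψ : Fin N → ℂ} (h : Normalized ψ) (i : Fin N) :
    ‖ψ i‖ ^ 2 ≤ 1 :=
  h ▸ Finset.single_le_sum (f := fun j => ‖ψ j‖ ^ 2) (fun j _ => by positivity) (Finset.mem_univ i)

theorem Normalized.norm_toLp {N : ℕ} {ψ : Fin N → ℂ} (h : Normalized ψ) :
    ‖WithLp.toLp 2 ψ‖ = 1 := by
  rw [EuclideanSpace.norm_eq]
  exact (congrArg Real.sqrt h).trans Real.sqrt_one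

/-- finite-size content of Theorem 3: a normalized Dirichlet solution
with eigenenergy `E` lies within distance `|t|·√(|ψ_1|² + |ψ_N|²)` of the complement
`⋃_n [E_n, E_n + g]` of the forbidden region. -/
theorem stmt_10 (N : ℕ) (hN : 3 ≤ N) (t : ℝ) (g : ℝ) (hg : 0 ≤ g) (V : Fin N → ℝ)
    (hH : (periodicH N t V).IsHermitian) (e : Fin N → ℝ)
    (he : IsSortedEigenvalues hH e)
    (ψ : Fin N → ℂ) (hnorm : Normalized ψ) (E : ℝ)
    (hsol : DirichletNLS N t g V ψ E) :
    Metric.infDist E (⋃ n : Fin N, Set.Icc (e n) (e n + g)) ≤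
      |t| * Real.sqrt (‖ψ ⟨0, by omega⟩‖ ^ 2 +
        ‖ψ ⟨N - 1, by omega⟩‖ ^ 2) := by
  have hd : ∀ i, g * ‖ψ i‖ ^ 2 ∈ Icc 0 g := fun i =>
    ⟨by positivity, mul_le_of_le_one_right hg (hnorm.norm_sq_le_one i)⟩
  have hB : (periodicH N t V + diagonal fun i => ((g * ‖ψ i‖ ^ 2 : ℝ) : ℂ)).IsHermitian :=
    hH.add (isHermitian_diagonal_of_self_adjoint _ (by ext i; simp [Complex.conj_ofReal]))
  obtain ⟨k, hk⟩ := hB.eigenvectorBasis.exists_abs_sub_le_norm_sub_smul_of_eigen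
    hB.toEuclideanLin_eigenvectorBasis hnorm.norm_toLp E
  rw [RCLike.ofReal_eq_complex_ofReal, hsol.toEuclideanLin_periodicH_sub_smul (by omega),
    norm_smul, EuclideanSpace.norm_single_add_single (Fin.ne_of_val_ne (by simp; omega)),
    Complex.norm_real, Real.norm_eq_abs] at hk
  obtain ⟨j, hj⟩ := hH.exists_eigenvalues_add_diagonal_mem_Icc hd hB k
  obtain ⟨-, σ, hσ⟩ := he
  have hmem : hB.eigenvalues k ∈ ⋃ n, Icc (e n) (e n + g) :=
    mem_iUnion.2 ⟨σ.symm j, by rwa [hσ, σ.apply_symm_apply]⟩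
  calc Metric.infDist E (⋃ n, Icc (e n) (e n + g))
      ≤ dist E (hB.eigenvalues k) := Metric.infDist_le_dist_of_mem hmem
    _ = |hB.eigenvalues k - E| := by rw [Real.dist_eq, abs_sub_comm]
    _ ≤ _ := hk
end
end

section
/- Fix real numbers t and g. Let N : ℕ → ℕ with N(k) ≥ 3 for all k, and for each k let V^(k) : {1,…,N(k)} → ℝ be a potential, H_0^P(k) the corresponding linear Hamiltonian with periodic boundary conditions, and ψ^(k) ∈ ℂ^{N(k)} a normalized solution (∑_i |ψ^(k)_i|² = 1) of the stationary nonlinear Schrödinger equation with periodic boundary conditions and eigenenergy E^(k) ∈ ℝ. If U_max^(k) := max_i |ψ^(k)_i|² → 0 as k → ∞, then dist(E^(k), σ(H_0^P(k))) → 0 as k → ∞. -/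
/-!
The nonlinear equation says that `H₀ᴾ ψ - E ψ = -g |ψ|² ψ`, so `ψ` is an approximate eigenvector
of the linear Hamiltonian with residual of norm at most `|g| U_max ‖ψ‖`. For a Hermitian matrix,
expanding in an orthonormal eigenbasis gives `dist(E, σ(A)) ‖v‖ ≤ ‖A v - E v‖` for every `v`.
Hence `dist(E⁽ᵏ⁾, σ(H₀ᴾ(k))) ≤ |g| U_max⁽ᵏ⁾ → 0`.
-/

open Matrix Filter

open Metric InnerProductSpace

theorem Matrix.IsHermitian.infDist_eigenvalues_mul_norm_le {𝕜 n : Type*} [RCLike 𝕜] [Fintype n]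
    [DecidableEq n] {A : Matrix n n 𝕜} (hA : A.IsHermitian) (E : ℝ) (v : EuclideanSpace 𝕜 n) :
    infDist E (Set.range hA.eigenvalues) * ‖v‖ ≤ ‖toEuclideanLin A v - (E : 𝕜) • v‖ := by
  set b := hA.eigenvectorBasis
  set d := infDist E (Set.range hA.eigenvalues)
  have hinner : ∀ i, ⟪b i, toEuclideanLin A v - (E : 𝕜) • v⟫_𝕜
      = ((hA.eigenvalues i - E : ℝ) : 𝕜) * ⟪b i, v⟫_𝕜 := by
    intro i
    have hb : toEuclideanLin A (b i) = (hA.eigenvalues i : 𝕜) • b i := by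
      rw [toLpLin_apply, hA.mulVec_eigenvectorBasis, RCLike.real_smul_eq_coe_smul (K := 𝕜)]
      rfl
    rw [inner_sub_right, inner_smul_right, ← isSymmetric_toEuclideanLin_iff.mpr hA, hb,
      inner_smul_left, RCLike.conj_ofReal]
    push_cast
    ring
  have hd : ∀ i, d ≤ ‖((hA.eigenvalues i - E : ℝ) : 𝕜)‖ := fun i => by
    rw [RCLike.norm_ofReal, ← Real.dist_eq, dist_comm]
    exact infDist_le_dist_of_mem (Set.mem_range_self i)
  have hsq : (d * ‖v‖) ^ 2 ≤ ‖toEuclideanLin A v - (E : 𝕜) • v‖ ^ 2 := calc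
    (d * ‖v‖) ^ 2 = ∑ i, d ^ 2 * ‖⟪b i, v⟫_𝕜‖ ^ 2 := by
      rw [mul_pow, ← b.sum_sq_norm_inner_right v, Finset.mul_sum]
    _ ≤ ∑ i, ‖((hA.eigenvalues i - E : ℝ) : 𝕜)‖ ^ 2 * ‖⟪b i, v⟫_𝕜‖ ^ 2 := by
      gcongr with i
      · exact infDist_nonneg
      · exact hd i
    _ = ‖toEuclideanLin A v - (E : 𝕜) • v‖ ^ 2 := by
      simp_rw [← b.sum_sq_norm_inner_right, hinner, norm_mul, mul_pow]
  exact (pow_le_pow_iff_left₀ (mul_nonneg infDist_nonneg (norm_nonneg _)) (norm_nonneg _)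
    two_ne_zero).mp hsq

theorem EuclideanSpace.norm_le_mul_norm_of_forall {𝕜 n : Type*} [RCLike 𝕜] [Fintype n]
    {u v : EuclideanSpace 𝕜 n} {c : ℝ} (hc : 0 ≤ c) (h : ∀ i, ‖u i‖ ≤ c * ‖v i‖) :
    ‖u‖ ≤ c * ‖v‖ := by
  have hsq : ‖u‖ ^ 2 ≤ (c * ‖v‖) ^ 2 := by
    simp_rw [mul_pow, EuclideanSpace.norm_sq_eq, Finset.mul_sum, ← mul_pow]
    gcongr with i
    exact h i
  exact (pow_le_pow_iff_left₀ (norm_nonneg _) (mul_nonneg hc (norm_nonneg _)) two_ne_zero).mp hsq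

theorem periodicH_mulVec_apply (N : ℕ) (t : ℝ) (V : Fin N → ℝ) (ψ : Fin N → ℂ) (i : Fin N) :
    (periodicH N t V *ᵥ ψ) i = t * (ψ (pSucc i) + ψ (pPred i)) + V i * ψ i := by
  simp [periodicH, mulVec, dotProduct, add_mul, ite_mul, Finset.sum_add_distrib, mul_add]

theorem PeriodicNLS.infDist_eigenvalues_le {N : ℕ} {t g : ℝ} {V : Fin N → ℝ} {ψ : Fin N → ℂ}
    {E : ℝ} (hsol : PeriodicNLS N t g V ψ E) (hH : (periodicH N t V).IsHermitian)
    (hnorm : Normalized ψ) :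
    infDist E (Set.range hH.eigenvalues) ≤ |g| * ⨆ i, ‖ψ i‖ ^ 2 := by
  set U := ⨆ i, ‖ψ i‖ ^ 2
  have hUi : ∀ i, ‖ψ i‖ ^ 2 ≤ U := le_ciSup (Set.finite_range _).bddAbove
  have hU : 0 ≤ U := Real.iSup_nonneg fun i => by positivity
  have hv : ‖WithLp.toLp 2 ψ‖ = 1 := by
    rw [EuclideanSpace.norm_eq]
    simpa using congrArg Real.sqrt hnorm
  have hres : toEuclideanLin (periodicH N t V) (WithLp.toLp 2 ψ) - (E : ℂ) • WithLp.toLp 2 ψ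
      = WithLp.toLp 2 fun i => -(g * ‖ψ i‖ ^ 2 * ψ i) := by
    ext i
    simp only [toLpLin_apply, PiLp.sub_apply, PiLp.smul_apply, smul_eq_mul, periodicH_mulVec_apply]
    linear_combination hsol i
  have hbound : ∀ i, ‖-((g : ℂ) * ‖ψ i‖ ^ 2 * ψ i)‖ ≤ |g| * U * ‖ψ i‖ := fun i => by
    rw [norm_neg, norm_mul, norm_mul, norm_pow, Complex.norm_real, Complex.norm_real, norm_norm,
      Real.norm_eq_abs]
    gcongr
    exact hUi i
  calc infDist E (Set.range hH.eigenvalues)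
      = infDist E (Set.range hH.eigenvalues) * ‖WithLp.toLp 2 ψ‖ := by rw [hv, mul_one]
    _ ≤ ‖toEuclideanLin (periodicH N t V) (WithLp.toLp 2 ψ) - (E : ℂ) • WithLp.toLp 2 ψ‖ :=
      hH.infDist_eigenvalues_mul_norm_le E _
    _ ≤ |g| * U * ‖WithLp.toLp 2 ψ‖ := by
      rw [hres]
      exact EuclideanSpace.norm_le_mul_norm_of_forall (by positivity) hbound
    _ = |g| * U := by rw [hv, mul_one]

theorem stmt_12_general (t g : ℝ) (N : ℕ → ℕ)
    (V : ∀ k, Fin (N k) → ℝ) (ψ : ∀ k, Fin (N k) → ℂ) (E : ℕ → ℝ)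
    (hH : ∀ k, (periodicH (N k) t (V k)).IsHermitian)
    (hnorm : ∀ k, Normalized (ψ k))
    (hsol : ∀ k, PeriodicNLS (N k) t g (V k) (ψ k) (E k))
    (hU : Tendsto (fun k => ⨆ i : Fin (N k), ‖ψ k i‖ ^ 2) atTop (nhds 0)) :
    Tendsto (fun k => Metric.infDist (E k) (Set.range (hH k).eigenvalues)) atTop (nhds 0) := by
  refine squeeze_zero (fun k => infDist_nonneg)
    (fun k => (hsol k).infDist_eigenvalues_le (hH k) (hnorm k)) ?_
  simpa using hU.const_mul |g|

/-- Theorem 2 of the paper, periodic boundary conditions: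
for a sequence of normalized periodic solutions with `U_max^(k) → 0`
(critical or extended states), the distance of the eigenenergies to the spectrum
of the linear periodic Hamiltonian tends to zero. -/
theorem stmt_12 (t g : ℝ) (N : ℕ → ℕ) (hN : ∀ k, 3 ≤ N k)
    (V : ∀ k, Fin (N k) → ℝ) (ψ : ∀ k, Fin (N k) → ℂ) (E : ℕ → ℝ)
    (hH : ∀ k, (periodicH (N k) t (V k)).IsHermitian)
    (hnorm : ∀ k, Normalized (ψ k))
    (hsol : ∀ k, PeriodicNLS (N k) t g (V k) (ψ k) (E k))
    (hU : Tendsto (fun k => ⨆ i : Fin (N k), ‖ψ k i‖ ^ 2) atTop (nhds 0)) :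
    Tendsto (fun k => Metric.infDist (E k) (Set.range (hH k).eigenvalues)) atTop (nhds 0) :=
  stmt_12_general t g N V ψ E hH hnorm hsol hU
end
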